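/- Let P be a group and N a cyclic normal subgroup of P. Then for every integer l ≥ 0, the commutator subgroup [℧_l(N), P] is contained in ℧_l([N,P]). -/

import Mathlib

/-- `℧_l(N)`, the subgroup generated by the `p ^ l`-th powers of elements of `N`. -/
def agemo (p l : ℕ) {G : Type*} [Group G] (N : Subgroup G) : Subgroup G :=
  Subgroup.closure ((fun x : G => x ^ p ^ l) '' (N : Set G))

/-- If `N` is a finite cyclic normal `p`-subgroup of `P` then for every `l ≥ 0` one has
`[℧_l(N), P] ≤ ℧_l([N, P])`. -/
theorem commutator_agemo_le_agemo_commutator {p : ℕ} (hp : p.Prime)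
    {P : Type*} [Group P] (N : Subgroup P) [N.Normal]
    (hNfin : Finite N) (hNcyc : IsCyclic N) (hNp : IsPGroup p N) :
    ∀ l : ℕ, ⁅agemo p l N, (⊤ : Subgroup P)⁆ ≤ agemo p l ⁅N, (⊤ : Subgroup P)⁆ := by
  intro l
  have hcomm : ∀ a ∈ N, ∀ b ∈ N, a * b = b * a := by
    intro a ha b hb
    letI : CommGroup N := IsCyclic.commGroup
    exact congrArg Subtype.val (mul_comm (⟨a, ha⟩ : N) ⟨b, hb⟩)
  rw [Subgroup.commutator_le]
  intro g hg q _
  obtain ⟨x, hx, rfl⟩ : ∃ x ∈ N, x ^ p ^ l = g := by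
    refine Subgroup.closure_induction ?_ ?_ ?_ ?_ hg
    · rintro _ ⟨x, hx, rfl⟩; exact ⟨x, hx, rfl⟩
    · exact ⟨1, N.one_mem, one_pow _⟩
    · rintro _ _ _ _ ⟨a, ha, rfl⟩ ⟨b, hb, rfl⟩
      exact ⟨a * b, N.mul_mem ha hb,
        Commute.mul_pow (hcomm a ha b hb) _⟩
    · rintro _ _ ⟨a, ha, rfl⟩
      exact ⟨a⁻¹, N.inv_mem ha, inv_pow a _⟩
  have hm : q * x * q⁻¹ ∈ N := Subgroup.Normal.conj_mem ‹N.Normal› x hx q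
  have hc : Commute x (q * x * q⁻¹)⁻¹ :=
    Commute.inv_right (hcomm x hx _ hm)
  open scoped commutatorElement in
  have key : ⁅x ^ p ^ l, q⁆ = ⁅x, q⁆ ^ p ^ l := by
    have h1 : ⁅x, q⁆ = x * (q * x * q⁻¹)⁻¹ := by
      simp [commutatorElement_def]; group
    have h3 : (q * x * q⁻¹) ^ p ^ l = q * x ^ p ^ l * q⁻¹ := by
      rw [conj_pow]
    have h2 : ⁅x ^ p ^ l, q⁆ = x ^ p ^ l * ((q * x * q⁻¹)⁻¹) ^ p ^ l := by
      rw [inv_pow, h3]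
      simp [commutatorElement_def]; group
    rw [h1, h2, Commute.mul_pow hc]
  rw [key]
  open scoped commutatorElement in
  exact Subgroup.subset_closure
    ⟨⁅x, q⁆, Subgroup.commutator_mem_commutator hx (Subgroup.mem_top q), rfl⟩
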